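/- arXiv:1805.07462 — 4 statements merged into one kernel-verified Lean document; each statement's English description precedes it below -/
import Mathlib

section
/- Let G be a Young function and suppose there exist constants 1 < g⁻ ≤ g⁺ < ∞ such that g⁻ ≤ t G'(t)/G(t) ≤ g⁺ for all t > 0 (where G' = g). Then for every η > 0 there exists a constant C_η > 0 such that G(a+b) ≤ C_η G(a) + (1+η)^{g⁺} G(b) for all a, b > 0. -/
open Filter Topology Set

/-!
The Lieberman condition `t g(t) ≤ g⁺ G(t)` makes `G(t) / t^{g⁺}` nonincreasing, i.e.
`G(λ u) ≤ λ^{g⁺} G(u)` for `λ ≥ 1`. Without differentiating `G` this comes from a discrete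
Grönwall argument: on `[u, u e^h]` one has `g(s) ≤ g⁺ G(u e^h) / s`, so
`G(u e^h) (1 - g⁺ h) ≤ G(u)`; iterating over `n` steps of length `c / n` and letting `n → ∞`
gives `G(u e^c) ≤ e^{g⁺ c} G(u)`. Then `G(a + b)` is bounded by `G((1 + 1/η) a)` when
`η b < a` and by `G((1 + η) b)` otherwise.
-/

section Scaling

variable {G : ℝ → ℝ} {p : ℝ}

theorem mul_one_sub_pow_le_of_step {h : ℝ} (hh : 0 ≤ h) (hph : 0 ≤ 1 - p * h)
    (hstep : ∀ u > 0, ∀ δ ≥ 0, G (u * Real.exp δ) * (1 - p * δ) ≤ G u)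
    {u : ℝ} (hu : 0 < u) (k : ℕ) :
    G (u * Real.exp (k * h)) * (1 - p * h) ^ k ≤ G u := by
  induction k with
  | zero => simp
  | succ k ih =>
    have hk : G (u * Real.exp ((k + 1 : ℕ) * h)) * (1 - p * h) ≤ G (u * Real.exp (k * h)) := by
      have := hstep (u * Real.exp (k * h)) (by positivity) h hh
      rwa [mul_assoc, ← Real.exp_add, ← add_one_mul, ← Nat.cast_add_one] at this
    calc G (u * Real.exp ((k + 1 : ℕ) * h)) * (1 - p * h) ^ (k + 1)
        = G (u * Real.exp ((k + 1 : ℕ) * h)) * (1 - p * h) * (1 - p * h) ^ k := by ring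
      _ ≤ G (u * Real.exp (k * h)) * (1 - p * h) ^ k := by gcongr
      _ ≤ G u := ih

theorem le_exp_mul_of_step
    (hstep : ∀ u > 0, ∀ δ ≥ 0, G (u * Real.exp δ) * (1 - p * δ) ≤ G u)
    {u : ℝ} (hu : 0 < u) {c : ℝ} (hc : 0 ≤ c) :
    G (u * Real.exp c) ≤ Real.exp (p * c) * G u := by
  have hsteps : ∀ᶠ n : ℕ in atTop, G (u * Real.exp c) * (1 + -(p * c) / n) ^ n ≤ G u := by
    filter_upwards [eventually_gt_atTop ⌈|p * c|⌉₊] with n hn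
    have hn' : |p * c| < n := Nat.lt_of_ceil_lt hn
    have hn0 : (0 : ℝ) < n := (abs_nonneg _).trans_lt hn'
    have hph : 0 ≤ 1 - p * (c / n) := by
      rw [← mul_div_assoc, sub_nonneg, div_le_one hn0]
      exact (le_abs_self _).trans hn'.le
    have := mul_one_sub_pow_le_of_step (div_nonneg hc hn0.le) hph hstep hu n
    rwa [mul_div_cancel₀ c hn0.ne', ← mul_div_assoc, sub_eq_add_neg, ← neg_div] at this
  have hlim : Tendsto (fun n : ℕ => G (u * Real.exp c) * (1 + -(p * c) / n) ^ n) atTop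
      (𝓝 (G (u * Real.exp c) * Real.exp (-(p * c)))) :=
    (Real.tendsto_one_add_div_pow_exp _).const_mul _
  have hle := le_of_tendsto hlim hsteps
  calc G (u * Real.exp c)
      = Real.exp (p * c) * (G (u * Real.exp c) * Real.exp (-(p * c))) := by
        rw [mul_left_comm, ← Real.exp_add, add_neg_cancel, Real.exp_zero, mul_one]
    _ ≤ Real.exp (p * c) * G u := by gcongr

theorem le_rpow_mul_of_step
    (hstep : ∀ u > 0, ∀ δ ≥ 0, G (u * Real.exp δ) * (1 - p * δ) ≤ G u)
    {u : ℝ} (hu : 0 < u) {l : ℝ} (hl : 1 ≤ l) :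
    G (l * u) ≤ l ^ p * G u := by
  have hl0 : 0 < l := one_pos.trans_le hl
  have := le_exp_mul_of_step hstep hu (Real.log_nonneg hl)
  rwa [Real.exp_log hl0, mul_comm u l, mul_comm p, ← Real.rpow_def_of_pos hl0] at this

theorem add_le_of_le_rpow_mul (hG_nonneg : ∀ t > 0, 0 ≤ G t)
    (hG_mono : MonotoneOn G (Ioi 0)) (hscale : ∀ u > 0, ∀ l ≥ 1, G (l * u) ≤ l ^ p * G u)
    {η : ℝ} (hη : 0 < η) {a b : ℝ} (ha : 0 < a) (hb : 0 < b) :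
    G (a + b) ≤ (1 + 1 / η) ^ p * G a + (1 + η) ^ p * G b := by
  have hab : a + b ∈ Ioi 0 := add_pos ha hb
  rcases le_or_gt a (η * b) with ha_small | ha_large
  · have hsum : a + b ≤ (1 + η) * b := by linarith
    have h1 : G (a + b) ≤ (1 + η) ^ p * G b :=
      (hG_mono hab (mul_pos (by positivity) hb) hsum).trans (hscale b hb _ (by linarith))
    have h2 : 0 ≤ (1 + 1 / η) ^ p * G a := mul_nonneg (by positivity) (hG_nonneg a ha)
    linarith
  · have hsum : a + b ≤ (1 + 1 / η) * a := by
      have : b ≤ a / η := by rw [le_div_iff₀ hη]; linarith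
      rw [add_mul, one_mul, one_div_mul_eq_div]; linarith
    have h1 : G (a + b) ≤ (1 + 1 / η) ^ p * G a :=
      (hG_mono hab (mul_pos (by positivity) ha) hsum).trans
        (hscale a ha _ (le_add_of_nonneg_right (by positivity)))
    have h2 : 0 ≤ (1 + η) ^ p * G b := mul_nonneg (by positivity) (hG_nonneg b hb)
    linarith

end Scaling

namespace YoungFunction

variable {g G : ℝ → ℝ} (hg_nonneg : ∀ s, 0 ≤ g s) (hg0 : g 0 = 0)
  (hg_mono : MonotoneOn g (Ioi 0)) (hG : ∀ t ≥ 0, G t = ∫ s in (0 : ℝ)..t, g s)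
include hg_nonneg hg0 hg_mono

theorem integrand_monotoneOn_Ici : MonotoneOn g (Ici 0) := by
  intro x hx y hy hxy
  rcases (mem_Ici.mp hx).eq_or_lt with hx0 | hx0
  · rw [← hx0, hg0]; exact hg_nonneg y
  · exact hg_mono hx0 (hx0.trans_le hxy) hxy

theorem integrand_intervalIntegrable {u v : ℝ} (hu : 0 ≤ u) (hv : 0 ≤ v) :
    IntervalIntegrable g MeasureTheory.volume u v :=
  ((integrand_monotoneOn_Ici hg_nonneg hg0 hg_mono).mono
    fun _ hx => (le_inf hu hv).trans hx.1).intervalIntegrable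

include hG

theorem sub_eq_integral {u v : ℝ} (hu : 0 ≤ u) (hv : 0 ≤ v) :
    G v - G u = ∫ s in u..v, g s := by
  rw [hG u hu, hG v hv, ← intervalIntegral.integral_add_adjacent_intervals
    (integrand_intervalIntegrable hg_nonneg hg0 hg_mono le_rfl hu)
    (integrand_intervalIntegrable hg_nonneg hg0 hg_mono hu hv)]
  ring

theorem monotoneOn_Ici : MonotoneOn G (Ici 0) := by
  intro u hu v hv huv
  have := sub_eq_integral hg_nonneg hg0 hg_mono hG hu hv
  have : 0 ≤ ∫ s in u..v, g s := intervalIntegral.integral_nonneg huv fun s _ => hg_nonneg s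
  linarith

theorem mul_one_sub_le {p : ℝ} (hp : 0 ≤ p) (hupper : ∀ t > 0, t * g t ≤ p * G t) :
    ∀ u > 0, ∀ h ≥ 0, G (u * Real.exp h) * (1 - p * h) ≤ G u := by
  intro u hu h hh
  set v := u * Real.exp h
  have huv : u ≤ v := le_mul_of_one_le_right hu.le (Real.one_le_exp hh)
  have hv : 0 < v := hu.trans_le huv
  have hu_not_mem : (0 : ℝ) ∉ uIcc u v := by
    rw [uIcc_of_le huv]; exact fun h0 => hu.not_ge h0.1
  have hbound : ∫ s in u..v, g s ≤ ∫ s in u..v, p * G v * (1 / s) := by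
    refine intervalIntegral.integral_mono_on huv
      (integrand_intervalIntegrable hg_nonneg hg0 hg_mono hu.le hv.le) ?_ fun s hs => ?_
    · exact (continuousOn_const.mul (continuousOn_const.div continuousOn_id
        fun x hx => ne_of_mem_of_not_mem hx hu_not_mem)).intervalIntegrable
    · have hs0 : 0 < s := hu.trans_le hs.1
      have hGs : G s ≤ G v :=
        monotoneOn_Ici hg_nonneg hg0 hg_mono hG hs0.le hv.le hs.2
      rw [mul_one_div, le_div_iff₀ hs0, mul_comm]
      exact (hupper s hs0).trans (by gcongr)
  rw [intervalIntegral.integral_const_mul, integral_one_div hu_not_mem,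
    mul_div_cancel_left₀ _ hu.ne', Real.log_exp] at hbound
  have := sub_eq_integral hg_nonneg hg0 hg_mono hG hu.le hv.le
  linarith

end YoungFunction

theorem stmt2_general (g : ℝ → ℝ) (G : ℝ → ℝ) (gm gp : ℝ)
    (hg_nonneg : ∀ s, 0 ≤ g s)
    (hg0 : g 0 = 0)
    (hg_mono : MonotoneOn g (Set.Ioi 0))
    (hG : ∀ t ≥ 0, G t = ∫ s in (0:ℝ)..t, g s)
    (hgm : 1 < gm)
    (hLieb : ∀ t > 0, gm ≤ t * g t / G t ∧ t * g t / G t ≤ gp) :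
    ∀ η > 0, ∃ C > 0, ∀ a > 0, ∀ b > 0,
      G (a + b) ≤ C * G a + (1 + η) ^ gp * G b := by
  have hG_mono := YoungFunction.monotoneOn_Ici hg_nonneg hg0 hg_mono hG
  -- `G t = 0` would make the Lieberman quotient `0`, below `gm`.
  have hG_pos : ∀ t > 0, 0 < G t := by
    intro t ht
    have hG0 : G 0 = 0 := by rw [hG 0 le_rfl, intervalIntegral.integral_same]
    refine (hG0 ▸ hG_mono (mem_Ici.2 le_rfl) ht.le ht.le : 0 ≤ G t).lt_of_ne' fun h0 => ?_
    have := (hLieb t ht).1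
    rw [h0, div_zero] at this
    linarith
  have hgp : 0 ≤ gp := by linarith [(hLieb 1 one_pos).1, (hLieb 1 one_pos).2]
  have hupper : ∀ t > 0, t * g t ≤ gp * G t := fun t ht =>
    (div_le_iff₀' (hG_pos t ht)).1 ((hLieb t ht).2) |>.trans_eq (mul_comm _ _)
  have hstep := YoungFunction.mul_one_sub_le hg_nonneg hg0 hg_mono hG hgp hupper
  have hscale : ∀ u > 0, ∀ l ≥ 1, G (l * u) ≤ l ^ gp * G u := fun u hu l hl =>
    le_rpow_mul_of_step hstep hu hl
  intro η hη
  refine ⟨(1 + 1 / η) ^ gp, by positivity, fun a ha b hb => ?_⟩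
  exact add_le_of_le_rpow_mul (fun t ht => (hG_pos t ht).le)
    (hG_mono.mono Ioi_subset_Ici_self) hscale hη ha hb

/-- For a Young function `G` satisfying the Lieberman-type condition
`g⁻ ≤ t G'(t) / G t ≤ g⁺` (with `1 < g⁻ ≤ g⁺ < ∞`), for every `η > 0` there is `C_η > 0`
with `G (a+b) ≤ C_η * G a + (1+η)^{g⁺} * G b` for all `a, b > 0`. -/
theorem stmt2 (g : ℝ → ℝ) (G : ℝ → ℝ) (gm gp : ℝ)
    (hg_nonneg : ∀ s, 0 ≤ g s)
    (hg0 : g 0 = 0)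
    (hg_pos : ∀ s > 0, 0 < g s)
    (hg_mono : MonotoneOn g (Set.Ioi 0))
    (hG : ∀ t ≥ 0, G t = ∫ s in (0:ℝ)..t, g s)
    (hgm : 1 < gm) (hgmgp : gm ≤ gp)
    (hLieb : ∀ t > 0, gm ≤ t * g t / G t ∧ t * g t / G t ≤ gp) :
    ∀ η > 0, ∃ C > 0, ∀ a > 0, ∀ b > 0,
      G (a + b) ≤ C * G a + (1 + η) ^ gp * G b :=
  stmt2_general g G gm gp hg_nonneg hg0 hg_mono hG hgm hLieb
end

section
/- Let G be a Young function with derivative g satisfying g⁻ ≤ t g(t)/G(t) ≤ g⁺ for all t > 0 with g⁻ > 1. Define the Orlicz–Sobolev conjugate by (G*)⁻¹(t) = ∫₀ᵗ G⁻¹(s) s^{-(1+1/N)} ds, for an integer N ≥ 2, assuming ∫₀¹ G⁻¹(s) s^{-(1+1/N)} ds < ∞. Then lim_{t→∞} (G*)⁻¹(t) / G⁻¹(t^{(N-1)/N}) = 0; equivalently, G increases essentially more slowly than (G*)^{(N-1)/N}. -/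
/-!
Let `φ = G⁻¹`. The bounds `g⁻ ≤ t g(t) / G(t) ≤ g⁺` say that `G(t) / t^g⁻` increases and
`G(t) / t^g⁺` decreases; inverting, `φ(s) / s^(1/g⁺)` increases and `φ(s) / s^(1/g⁻)` decreases,
with `1/g⁻ < 1`. With `α = 1/N` and `T = t^(1-α)`, split `∫₀ᵗ φ(s) s^(-1-α) ds` at `1` and `T`.
The part over `[0, 1]` is a constant while `φ(T) → ∞`. On `[1, T]` compare `φ(s)` with
`φ(T) (s/T)^η` for some `0 < η < α`, which contributes `O(T^(-η)) φ(T)`; on `[T, t]` compare it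
with `φ(T) (s/T)^θ` for some `α < θ < 1`, which contributes `O(t^(-α(1-θ))) φ(T)`.
-/

open Filter Topology Set MeasureTheory

namespace OrliczSobolev

lemma monotoneOn_of_monotoneOn_log {f : ℝ → ℝ} {s : Set ℝ} (hf : ∀ x ∈ s, 0 < f x)
    (h : MonotoneOn (fun x => Real.log (f x)) s) : MonotoneOn f s :=
  fun x hx y hy hxy => (Real.log_le_log_iff (hf x hx) (hf y hy)).1 (h hx hy hxy)

lemma antitoneOn_of_antitoneOn_log {f : ℝ → ℝ} {s : Set ℝ} (hf : ∀ x ∈ s, 0 < f x)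
    (h : AntitoneOn (fun x => Real.log (f x)) s) : AntitoneOn f s :=
  fun x hx y hy hxy => (Real.log_le_log_iff (hf y hy) (hf x hx)).1 (h hx hy hxy)

section Young

variable {G g Ginv : ℝ → ℝ} {c : ℝ}

lemma hasDerivAt_log_div_rpow (hGpos : ∀ t > 0, 0 < G t) (hG : ∀ t > 0, HasDerivAt G (g t) t)
    {t : ℝ} (ht : 0 < t) :
    HasDerivAt (fun t => Real.log (G t / t ^ c)) (g t / G t - c * t⁻¹) t := by
  have hEq : EqOn (fun t => Real.log (G t) - c * Real.log t) (fun t => Real.log (G t / t ^ c))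
      (Ioi 0) := fun t (ht : 0 < t) => by
    simp only [Real.log_div (hGpos t ht).ne' (Real.rpow_pos_of_pos ht c).ne', Real.log_rpow ht]
  exact (((hG t ht).log (hGpos t ht).ne').sub ((Real.hasDerivAt_log ht.ne').const_mul c))
    |>.congr_of_eventuallyEq (hEq.symm.eventuallyEq_of_mem (Ioi_mem_nhds ht))

lemma monotoneOn_div_rpow_of_le_mul_div (hGpos : ∀ t > 0, 0 < G t)
    (hG : ∀ t > 0, HasDerivAt G (g t) t) (hc : ∀ t > 0, c ≤ t * g t / G t) :
    MonotoneOn (fun t => G t / t ^ c) (Ioi 0) := by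
  have hderiv := fun t (ht : t ∈ Ioi (0 : ℝ)) => hasDerivAt_log_div_rpow (c := c) hGpos hG ht
  refine monotoneOn_of_monotoneOn_log (fun t ht => div_pos (hGpos t ht) (Real.rpow_pos_of_pos ht c))
    (monotoneOn_of_hasDerivWithinAt_nonneg (convex_Ioi 0)
      (fun t ht => (hderiv t ht).continuousAt.continuousWithinAt)
      (by simpa using fun t ht => (hderiv t ht).hasDerivWithinAt) fun t ht => ?_)
  rw [interior_Ioi] at ht
  rw [sub_nonneg, ← div_eq_mul_inv, div_le_iff₀' ht, ← mul_div_assoc]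
  exact hc t ht

lemma antitoneOn_div_rpow_of_mul_div_le (hGpos : ∀ t > 0, 0 < G t)
    (hG : ∀ t > 0, HasDerivAt G (g t) t) (hc : ∀ t > 0, t * g t / G t ≤ c) :
    AntitoneOn (fun t => G t / t ^ c) (Ioi 0) := by
  have hderiv := fun t (ht : t ∈ Ioi (0 : ℝ)) => hasDerivAt_log_div_rpow (c := c) hGpos hG ht
  refine antitoneOn_of_antitoneOn_log (fun t ht => div_pos (hGpos t ht) (Real.rpow_pos_of_pos ht c))
    (antitoneOn_of_hasDerivWithinAt_nonpos (convex_Ioi 0)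
      (fun t ht => (hderiv t ht).continuousAt.continuousWithinAt)
      (by simpa using fun t ht => (hderiv t ht).hasDerivWithinAt) fun t ht => ?_)
  rw [interior_Ioi] at ht
  rw [sub_nonpos, ← div_eq_mul_inv, le_div_iff₀' ht, ← mul_div_assoc]
  exact hc t ht

lemma div_rpow_inv_eq_rpow_neg_inv (hGinv_pos : ∀ s > 0, 0 < Ginv s)
    (hright : ∀ s > 0, G (Ginv s) = s) (hc : c ≠ 0) {s : ℝ} (hs : 0 < s) :
    Ginv s / s ^ c⁻¹ = (G (Ginv s) / Ginv s ^ c) ^ (-c⁻¹) := by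
  have hy := hGinv_pos s hs
  rw [hright s hs, Real.div_rpow hs.le (Real.rpow_nonneg hy.le c), ← Real.rpow_mul hy.le,
    mul_neg, mul_inv_cancel₀ hc, Real.rpow_neg hs.le, Real.rpow_neg_one]
  field_simp

lemma antitoneOn_div_rpow_inv (hGinv_pos : ∀ s > 0, 0 < Ginv s)
    (hright : ∀ s > 0, G (Ginv s) = s) (hGinv_mono : MonotoneOn Ginv (Ioi 0)) (hc : 0 < c)
    (h : MonotoneOn (fun t => G t / t ^ c) (Ioi 0)) :
    AntitoneOn (fun s => Ginv s / s ^ c⁻¹) (Ioi 0) := by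
  intro a (ha : 0 < a) b (hb : 0 < b) hab
  simp only [div_rpow_inv_eq_rpow_neg_inv hGinv_pos hright hc.ne' ha,
    div_rpow_inv_eq_rpow_neg_inv hGinv_pos hright hc.ne' hb]
  have hy := hGinv_pos a ha
  exact Real.rpow_le_rpow_of_nonpos (by rw [hright a ha]; positivity)
    (h hy (hGinv_pos b hb) (hGinv_mono ha hb hab)) (by simpa using hc.le)

lemma monotoneOn_div_rpow_inv (hGinv_pos : ∀ s > 0, 0 < Ginv s)
    (hright : ∀ s > 0, G (Ginv s) = s) (hGinv_mono : MonotoneOn Ginv (Ioi 0)) (hc : 0 < c)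
    (h : AntitoneOn (fun t => G t / t ^ c) (Ioi 0)) :
    MonotoneOn (fun s => Ginv s / s ^ c⁻¹) (Ioi 0) := by
  intro a (ha : 0 < a) b (hb : 0 < b) hab
  simp only [div_rpow_inv_eq_rpow_neg_inv hGinv_pos hright hc.ne' ha,
    div_rpow_inv_eq_rpow_neg_inv hGinv_pos hright hc.ne' hb]
  have hy := hGinv_pos b hb
  exact Real.rpow_le_rpow_of_nonpos (by rw [hright b hb]; positivity)
    (h (hGinv_pos a ha) hy (hGinv_mono ha hb hab)) (by simpa using hc.le)

end Young

lemma div_rpow_eq_div_rpow_mul_rpow (x : ℝ) {s : ℝ} (hs : 0 < s) (r c : ℝ) :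
    x / s ^ r = x / s ^ c * s ^ (c - r) := by
  rw [Real.rpow_sub hs]
  field_simp

section Types

variable {φ : ℝ → ℝ} {α η η' θ θ' a b : ℝ}

lemma monotoneOn_div_rpow_of_le (h : MonotoneOn (fun s => φ s / s ^ η) (Ioi 0))
    (hφ : ∀ s > 0, 0 ≤ φ s) (hη : η' ≤ η) : MonotoneOn (fun s => φ s / s ^ η') (Ioi 0) := by
  intro x (hx : 0 < x) y (hy : 0 < y) hxy
  simp only [div_rpow_eq_div_rpow_mul_rpow _ hx η' η, div_rpow_eq_div_rpow_mul_rpow _ hy η' η]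
  exact mul_le_mul (h hx hy hxy) (Real.rpow_le_rpow hx.le hxy (sub_nonneg.2 hη))
    (by positivity) (div_nonneg (hφ y hy) (by positivity))

lemma antitoneOn_div_rpow_of_le (h : AntitoneOn (fun s => φ s / s ^ θ) (Ioi 0))
    (hφ : ∀ s > 0, 0 ≤ φ s) (hθ : θ ≤ θ') : AntitoneOn (fun s => φ s / s ^ θ') (Ioi 0) := by
  intro x (hx : 0 < x) y (hy : 0 < y) hxy
  simp only [div_rpow_eq_div_rpow_mul_rpow _ hx θ' θ, div_rpow_eq_div_rpow_mul_rpow _ hy θ' θ]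
  exact mul_le_mul (h hx hy hxy) (Real.rpow_le_rpow_of_nonpos hx hxy (sub_nonpos.2 hθ))
    (by positivity) (div_nonneg (hφ x hx) (by positivity))

lemma intervalIntegrable_div_rpow (hφ : MonotoneOn φ (Ioi 0)) (ha : 0 < a) (hb : 0 < b) (r : ℝ) :
    IntervalIntegrable (fun s => φ s / s ^ r) volume a b := by
  have hsub : uIcc a b ⊆ Ioi 0 := fun s hs => lt_of_lt_of_le (lt_min ha hb) hs.1
  have hcont : ContinuousOn (fun s : ℝ => (s ^ r)⁻¹) (uIcc a b) := fun s hs =>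
    ((Real.continuousAt_rpow_const s r (Or.inl (hsub hs).ne')).inv₀
      (Real.rpow_pos_of_pos (hsub hs) r).ne').continuousWithinAt
  simpa only [div_eq_mul_inv] using
    ((hφ.mono hsub).intervalIntegrable (μ := volume)).mul_continuousOn hcont

lemma integral_div_rpow_le_of_monotoneOn (h : MonotoneOn (fun s => φ s / s ^ η) (Ioi 0))
    (hφ : ∀ s > 0, 0 ≤ φ s) (hηα : η < α) (ha : 0 < a) (hab : a ≤ b)
    (hf : IntervalIntegrable (fun s => φ s / s ^ (1 + α)) volume a b) :
    ∫ s in a..b, φ s / s ^ (1 + α) ≤ φ b / b ^ η * (a ^ (η - α) / (α - η)) := by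
  have hb : 0 < b := ha.trans_le hab
  have h0 : (0 : ℝ) ∉ uIcc a b := by rw [uIcc_of_le hab]; exact fun h => ha.not_ge h.1
  calc ∫ s in a..b, φ s / s ^ (1 + α)
      ≤ ∫ s in a..b, φ b / b ^ η * s ^ (η - (1 + α)) := by
        refine intervalIntegral.integral_mono_on hab hf
          ((intervalIntegral.intervalIntegrable_rpow (Or.inr h0)).const_mul _) fun s hs => ?_
        have hs0 : 0 < s := ha.trans_le hs.1
        rw [div_rpow_eq_div_rpow_mul_rpow _ hs0 _ η]
        exact mul_le_mul_of_nonneg_right (h hs0 hb hs.2) (by positivity)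
    _ = φ b / b ^ η * ((a ^ (η - α) - b ^ (η - α)) / (α - η)) := by
        rw [intervalIntegral.integral_const_mul, integral_rpow (Or.inr ⟨by linarith, h0⟩)]
        congr 1
        rw [show η - (1 + α) + 1 = η - α by ring, ← neg_sub α η, div_neg, ← neg_div, neg_sub]
    _ ≤ φ b / b ^ η * (a ^ (η - α) / (α - η)) := by
        have := Real.rpow_nonneg hb.le (η - α)
        gcongr
        · exact div_nonneg (hφ b hb) (by positivity)
        · linarith

lemma integral_div_rpow_le_of_antitoneOn (h : AntitoneOn (fun s => φ s / s ^ θ) (Ioi 0))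
    (hφ : ∀ s > 0, 0 ≤ φ s) (hαθ : α < θ) (ha : 0 < a) (hab : a ≤ b)
    (hf : IntervalIntegrable (fun s => φ s / s ^ (1 + α)) volume a b) :
    ∫ s in a..b, φ s / s ^ (1 + α) ≤ φ a / a ^ θ * (b ^ (θ - α) / (θ - α)) := by
  have h0 : (0 : ℝ) ∉ uIcc a b := by rw [uIcc_of_le hab]; exact fun h => ha.not_ge h.1
  calc ∫ s in a..b, φ s / s ^ (1 + α)
      ≤ ∫ s in a..b, φ a / a ^ θ * s ^ (θ - (1 + α)) := by
        refine intervalIntegral.integral_mono_on hab hf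
          ((intervalIntegral.intervalIntegrable_rpow (Or.inr h0)).const_mul _) fun s hs => ?_
        have hs0 : 0 < s := ha.trans_le hs.1
        rw [div_rpow_eq_div_rpow_mul_rpow _ hs0 _ θ]
        exact mul_le_mul_of_nonneg_right (h ha hs0 hs.1) (by positivity)
    _ = φ a / a ^ θ * ((b ^ (θ - α) - a ^ (θ - α)) / (θ - α)) := by
        rw [intervalIntegral.integral_const_mul, integral_rpow (Or.inr ⟨by linarith, h0⟩),
          show θ - (1 + α) + 1 = θ - α by ring]
    _ ≤ φ a / a ^ θ * (b ^ (θ - α) / (θ - α)) := by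
        have := Real.rpow_nonneg ha.le (θ - α)
        gcongr
        · exact div_nonneg (hφ a ha) (by positivity)
        · linarith

lemma tendsto_atTop_of_monotoneOn_div_rpow (h : MonotoneOn (fun s => φ s / s ^ η) (Ioi 0))
    (hη : 0 < η) (hφ1 : 0 < φ 1) : Tendsto φ atTop atTop := by
  refine tendsto_atTop_mono' _ ?_ ((tendsto_rpow_atTop hη).const_mul_atTop hφ1)
  filter_upwards [eventually_ge_atTop 1] with s hs
  have hs0 : 0 < s := one_pos.trans_le hs
  have := h (mem_Ioi.2 one_pos) (mem_Ioi.2 hs0) hs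
  dsimp only at this
  rwa [Real.one_rpow, div_one, le_div_iff₀ (by positivity)] at this

lemma integral_div_rpow_div_le (hα : α < 1) (hη : 0 ≤ η) (hηα : η < α) (hαθ : α < θ)
    (hpos : ∀ s > 0, 0 < φ s) (hlow : MonotoneOn (fun s => φ s / s ^ η) (Ioi 0))
    (hup : AntitoneOn (fun s => φ s / s ^ θ) (Ioi 0))
    (hint : IntegrableOn (fun s => φ s / s ^ (1 + α)) (Ioc 0 1)) {t : ℝ} (ht : 1 ≤ t) :
    (∫ s in (0 : ℝ)..t, φ s / s ^ (1 + α)) / φ (t ^ (1 - α)) ≤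
      (∫ s in (0 : ℝ)..1, φ s / s ^ (1 + α)) / φ (t ^ (1 - α)) +
        (t ^ (1 - α)) ^ (-η) / (α - η) + t ^ (-(α * (1 - θ))) / (θ - α) := by
  set T := t ^ (1 - α)
  have ht0 : 0 < t := one_pos.trans_le ht
  have hT1 : 1 ≤ T := Real.one_le_rpow ht (by linarith)
  have hT0 : 0 < T := one_pos.trans_le hT1
  have hTt : T ≤ t := by
    simpa using Real.rpow_le_rpow_of_exponent_le ht (by linarith : 1 - α ≤ 1)
  have hφT := hpos T hT0
  have hφ : ∀ s > 0, 0 ≤ φ s := fun s hs => (hpos s hs).le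
  have hmono : MonotoneOn φ (Ioi 0) := by
    simpa using monotoneOn_div_rpow_of_le hlow hφ (by linarith : (0 : ℝ) ≤ η)
  have hint1T := intervalIntegrable_div_rpow hmono one_pos hT0 (1 + α)
  have hintTt := intervalIntegrable_div_rpow hmono hT0 ht0 (1 + α)
  have hint01 := (intervalIntegrable_iff_integrableOn_Ioc_of_le zero_le_one).2 hint
  have hsplit : ∫ s in (0 : ℝ)..t, φ s / s ^ (1 + α) = (∫ s in (0 : ℝ)..1, φ s / s ^ (1 + α)) +
      (∫ s in (1 : ℝ)..T, φ s / s ^ (1 + α)) + ∫ s in T..t, φ s / s ^ (1 + α) := by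
    rw [intervalIntegral.integral_add_adjacent_intervals hint01 hint1T,
      intervalIntegral.integral_add_adjacent_intervals (hint01.trans hint1T) hintTt]
  have hinner : (∫ s in (1 : ℝ)..T, φ s / s ^ (1 + α)) / φ T ≤ T ^ (-η) / (α - η) := by
    rw [div_le_iff₀ hφT]
    refine (integral_div_rpow_le_of_monotoneOn hlow hφ hηα one_pos hT1 hint1T).trans_eq ?_
    rw [Real.one_rpow, Real.rpow_neg hT0.le]
    field_simp
  have houter : (∫ s in T..t, φ s / s ^ (1 + α)) / φ T ≤ t ^ (-(α * (1 - θ))) / (θ - α) := by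
    rw [div_le_iff₀ hφT]
    refine (integral_div_rpow_le_of_antitoneOn hup hφ hαθ hT0 hTt hintTt).trans_eq ?_
    have hexp : t ^ (θ - α) / T ^ θ = t ^ (-(α * (1 - θ))) := by
      rw [← Real.rpow_mul ht0.le, ← Real.rpow_sub ht0]
      ring_nf
    rw [← hexp]
    field_simp
  rw [hsplit, add_div, add_div]
  linarith

theorem tendsto_integral_div_rpow_div_of_lt (hα : α < 1) (hη : 0 < η) (hηα : η < α)
    (hαθ : α < θ) (hθ : θ < 1) (hpos : ∀ s > 0, 0 < φ s)
    (hlow : MonotoneOn (fun s => φ s / s ^ η) (Ioi 0))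
    (hup : AntitoneOn (fun s => φ s / s ^ θ) (Ioi 0))
    (hint : IntegrableOn (fun s => φ s / s ^ (1 + α)) (Ioc 0 1)) :
    Tendsto (fun t => (∫ s in (0 : ℝ)..t, φ s / s ^ (1 + α)) / φ (t ^ (1 - α))) atTop (𝓝 0) := by
  have hT : Tendsto (fun t : ℝ => t ^ (1 - α)) atTop atTop := tendsto_rpow_atTop (by linarith)
  have hφT := (tendsto_atTop_of_monotoneOn_div_rpow hlow hη (hpos 1 one_pos)).comp hT
  have hlim : Tendsto (fun t : ℝ => (∫ s in (0 : ℝ)..1, φ s / s ^ (1 + α)) / φ (t ^ (1 - α)) +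
      (t ^ (1 - α)) ^ (-η) / (α - η) + t ^ (-(α * (1 - θ))) / (θ - α)) atTop (𝓝 0) := by
    have h1 := (tendsto_const_nhds (x := ∫ s in (0 : ℝ)..1, φ s / s ^ (1 + α))).div_atTop hφT
    have h2 := ((tendsto_rpow_neg_atTop hη).comp hT).div_const (α - η)
    have h3 := (tendsto_rpow_neg_atTop (by nlinarith : 0 < α * (1 - θ))).div_const (θ - α)
    simpa using (h1.add h2).add h3
  refine squeeze_zero' ?_ ?_ hlim
  · filter_upwards [eventually_gt_atTop 0] with t ht
    refine div_nonneg ?_ (hpos _ (Real.rpow_pos_of_pos ht _)).le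
    rw [intervalIntegral.integral_of_le ht.le]
    exact setIntegral_nonneg measurableSet_Ioc fun s hs =>
      div_nonneg (hpos s hs.1).le (Real.rpow_nonneg hs.1.le _)
  · filter_upwards [eventually_ge_atTop 1] with t ht
    exact integral_div_rpow_div_le hα hη.le hηα hαθ hpos hlow hup hint ht

theorem tendsto_integral_div_rpow_div (hα0 : 0 < α) (hα : α < 1) (hη : 0 < η) (hθ : θ < 1)
    (hpos : ∀ s > 0, 0 < φ s) (hlow : MonotoneOn (fun s => φ s / s ^ η) (Ioi 0))
    (hup : AntitoneOn (fun s => φ s / s ^ θ) (Ioi 0))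
    (hint : IntegrableOn (fun s => φ s / s ^ (1 + α)) (Ioc 0 1)) :
    Tendsto (fun t => (∫ s in (0 : ℝ)..t, φ s / s ^ (1 + α)) / φ (t ^ (1 - α))) atTop (𝓝 0) := by
  have hφ : ∀ s > 0, 0 ≤ φ s := fun s hs => (hpos s hs).le
  exact tendsto_integral_div_rpow_div_of_lt (η := min η (α / 2)) (θ := max θ ((1 + α) / 2)) hα
    (lt_min hη (by linarith)) (min_lt_of_right_lt (by linarith))
    (lt_max_of_lt_right (by linarith)) (max_lt hθ (by linarith))
    hpos (monotoneOn_div_rpow_of_le hlow hφ (min_le_left _ _))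
    (antitoneOn_div_rpow_of_le hup hφ (le_max_left _ _)) hint

end Types

end OrliczSobolev

open OrliczSobolev

theorem stmt10_general (g G Ginv : ℝ → ℝ) (gm gp : ℝ) (N : ℕ) (hN : 2 ≤ N)
    (hG0 : G 0 = 0)
    (hGsm : StrictMonoOn G (Set.Ici 0))
    (hderiv : ∀ t > 0, HasDerivAt G (g t) t)
    (hgm : 1 < gm)
    (hLieb : ∀ t > 0, gm ≤ t * g t / G t ∧ t * g t / G t ≤ gp)
    (hinv_nonneg : ∀ s ≥ 0, 0 ≤ Ginv s)
    (hright : ∀ s ≥ 0, G (Ginv s) = s)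
    (hconv0 : IntegrableOn (fun s => Ginv s / s ^ ((1:ℝ) + 1 / N)) (Set.Ioc 0 1)) :
    Tendsto
      (fun t => (∫ s in (0:ℝ)..t, Ginv s / s ^ ((1:ℝ) + 1 / N)) /
        Ginv (t ^ (((N:ℝ) - 1) / N)))
      atTop (𝓝 0) := by
  have hGpos : ∀ t > 0, 0 < G t := fun t ht =>
    hG0 ▸ hGsm (mem_Ici.2 le_rfl) (mem_Ici.2 ht.le) ht
  have hright_pos : ∀ s > 0, G (Ginv s) = s := fun s hs => hright s hs.le
  have hGinv_pos : ∀ s > 0, 0 < Ginv s := fun s hs =>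
    (hGsm.lt_iff_lt (mem_Ici.2 le_rfl) (hinv_nonneg s hs.le)).1 (by rwa [hG0, hright_pos s hs])
  have hGinv_mono : MonotoneOn Ginv (Ioi 0) := fun a (ha : 0 < a) b (hb : 0 < b) hab =>
    (hGsm.le_iff_le (hinv_nonneg a ha.le) (hinv_nonneg b hb.le)).1
      (by rwa [hright_pos a ha, hright_pos b hb])
  have hgp : 0 < gp := by linarith [hLieb 1 one_pos]
  have hup := antitoneOn_div_rpow_inv hGinv_pos hright_pos hGinv_mono (by linarith)
    (monotoneOn_div_rpow_of_le_mul_div hGpos hderiv fun t ht => (hLieb t ht).1)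
  have hlow := monotoneOn_div_rpow_inv hGinv_pos hright_pos hGinv_mono hgp
    (antitoneOn_div_rpow_of_mul_div_le hGpos hderiv fun t ht => (hLieb t ht).2)
  have hN' : (2 : ℝ) ≤ N := by exact_mod_cast hN
  rw [show ((N : ℝ) - 1) / N = 1 - 1 / N by field_simp]
  exact tendsto_integral_div_rpow_div (by positivity) (by rw [div_lt_one] <;> linarith)
    (inv_pos.2 hgp) (inv_lt_one_of_one_lt₀ hgm) hGinv_pos hlow hup hconv0

/-- Let `G` be a Young function with derivative `g` satisfying
`g⁻ ≤ t g t / G t ≤ g⁺` (`g⁻ > 1`), and define the inverse of the Orlicz–Sobolev conjugate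
`(G*)⁻¹(t) = ∫₀ᵗ G⁻¹(s) s^{-(1+1/N)} ds` (`N ≥ 2`, integral convergent at `0`). Then
`lim_{t→∞} (G*)⁻¹(t) / G⁻¹(t^{(N-1)/N}) = 0`,
i.e. `G` increases essentially more slowly than `(G*)^{(N-1)/N}`. -/
theorem stmt10 (g G Ginv : ℝ → ℝ) (gm gp : ℝ) (N : ℕ) (hN : 2 ≤ N)
    (hG0 : G 0 = 0)
    (hGsm : StrictMonoOn G (Set.Ici 0))
    (hGconv : ConvexOn ℝ (Set.Ici 0) G)
    (hGtop : Tendsto G atTop atTop)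
    (hderiv : ∀ t > 0, HasDerivAt G (g t) t)
    (hgm : 1 < gm) (hgmgp : gm ≤ gp)
    (hLieb : ∀ t > 0, gm ≤ t * g t / G t ∧ t * g t / G t ≤ gp)
    (hinv_nonneg : ∀ s ≥ 0, 0 ≤ Ginv s)
    (hright : ∀ s ≥ 0, G (Ginv s) = s)
    (hleft : ∀ t ≥ 0, Ginv (G t) = t)
    (hconv0 : IntegrableOn (fun s => Ginv s / s ^ ((1:ℝ) + 1 / N)) (Set.Ioc 0 1)) :
    Tendsto
      (fun t => (∫ s in (0:ℝ)..t, Ginv s / s ^ ((1:ℝ) + 1 / N)) /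
        Ginv (t ^ (((N:ℝ) - 1) / N)))
      atTop (𝓝 0) :=
  stmt10_general g G Ginv gm gp N hN hG0 hGsm hderiv hgm hLieb hinv_nonneg hright hconv0
end

section
/- Let G be a Young function with derivative g satisfying g⁻ ≤ t g(t)/G(t) ≤ g⁺ for all t > 0, with 1 < g⁻ ≤ g⁺ < ∞, and let N ≥ 2. Then lim_{t→∞} (N / t^{1/N}) · G⁻¹(t) / G⁻¹(t^{1-1/N}) = 0. -/
open Filter Topology Set

lemma stmt11_aux (g G : ℝ → ℝ) (gm : ℝ)
    (hG0 : G 0 = 0)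
    (hGsm : StrictMonoOn G (Set.Ici 0))
    (hderiv : ∀ t > 0, HasDerivAt G (g t) t)
    (hLieb : ∀ t > 0, gm ≤ t * g t / G t)
    {x μ : ℝ} (hx : 0 < x) (hμ : 1 ≤ μ) :
    μ ^ gm * G x ≤ G (μ * x) := by
  have hGpos : ∀ t > 0, 0 < G t := fun t ht => by
    have := hGsm Set.self_mem_Ici (le_of_lt ht) ht
    simpa [hG0] using this
  set F : ℝ → ℝ := fun t => G t / t ^ gm with hF
  have hmono : MonotoneOn F (Set.Ici x) := by
    have hDF : ∀ t ∈ interior (Set.Ici x), HasDerivAt F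
        ((g t * t ^ gm - G t * (gm * t ^ (gm - 1))) / (t ^ gm) ^ 2) t := by
      intro t ht
      rw [interior_Ici] at ht
      have htpos : 0 < t := lt_trans hx ht
      exact (hderiv t htpos).div (Real.hasDerivAt_rpow_const (Or.inl htpos.ne'))
        (Real.rpow_pos_of_pos htpos gm).ne'
    apply monotoneOn_of_deriv_nonneg (convex_Ici x)
    · intro t ht
      have htpos : 0 < t := lt_of_lt_of_le hx ht
      have : ContinuousAt F t := by
        have h1 : ContinuousAt G t := ((hderiv t htpos).differentiableAt).continuousAt
        have h2 : ContinuousAt (fun t : ℝ => t ^ gm) t :=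
          Real.continuousAt_rpow_const t gm (Or.inl htpos.ne')
        exact h1.div h2 (Real.rpow_pos_of_pos htpos gm).ne'
      exact this.continuousWithinAt
    · intro t ht
      exact ((hDF t ht).differentiableAt).differentiableWithinAt
    · intro t ht
      rw [(hDF t ht).deriv]
      rw [interior_Ici] at ht
      have htpos : 0 < t := lt_trans hx ht
      have hGt := hGpos t htpos
      have hL : gm * G t ≤ t * g t := by
        have := hLieb t htpos
        rw [le_div_iff₀ hGt] at this
        linarith
      apply div_nonneg _ (sq_nonneg _)
      have h1 : t ^ gm = t ^ (gm - 1) * t := by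
        rw [← Real.rpow_add_one htpos.ne']
        ring_nf
      have h2 : (0:ℝ) < t ^ (gm - 1) := Real.rpow_pos_of_pos htpos _
      rw [h1]
      nlinarith [mul_le_mul_of_nonneg_left hL h2.le]
  have hle : F x ≤ F (μ * x) := by
    apply hmono (le_refl x) _ (le_mul_of_one_le_left hx.le hμ)
    exact le_mul_of_one_le_left hx.le hμ
  have hxg : (0:ℝ) < x ^ gm := Real.rpow_pos_of_pos hx gm
  have hμx : (0:ℝ) < μ * x := mul_pos (lt_of_lt_of_le one_pos hμ) hx
  have hmul : (μ * x) ^ gm = μ ^ gm * x ^ gm :=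
    Real.mul_rpow (by linarith) hx.le
  rw [hF] at hle
  simp only at hle
  rw [div_le_div_iff₀ hxg (Real.rpow_pos_of_pos hμx gm)] at hle
  rw [hmul] at hle
  have hμg : (0:ℝ) < μ ^ gm := Real.rpow_pos_of_pos (by linarith) gm
  nlinarith

/-- Under the Lieberman condition `g⁻ ≤ t g t / G t ≤ g⁺` with `g⁻ > 1`,
for `N ≥ 2`, `lim_{t→∞} (N / t^{1/N}) · G⁻¹(t) / G⁻¹(t^{1-1/N}) = 0`. -/
theorem stmt11 (g G Ginv : ℝ → ℝ) (gm gp : ℝ) (N : ℕ) (hN : 2 ≤ N)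
    (hG0 : G 0 = 0)
    (hGcont : ContinuousOn G (Set.Ici 0))
    (hGsm : StrictMonoOn G (Set.Ici 0))
    (hGconv : ConvexOn ℝ (Set.Ici 0) G)
    (hGtop : Tendsto G atTop atTop)
    (hderiv : ∀ t > 0, HasDerivAt G (g t) t)
    (hgm : 1 < gm) (hgmgp : gm ≤ gp)
    (hLieb : ∀ t > 0, gm ≤ t * g t / G t ∧ t * g t / G t ≤ gp)
    (hinv_nonneg : ∀ s ≥ 0, 0 ≤ Ginv s)
    (hright : ∀ s ≥ 0, G (Ginv s) = s)
    (hleft : ∀ t ≥ 0, Ginv (G t) = t) :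
    Tendsto (fun t => ((N : ℝ) / t ^ ((1:ℝ) / N)) * (Ginv t / Ginv (t ^ (1 - (1:ℝ) / N))))
      atTop (𝓝 0) := by
  have hNpos : (0:ℝ) < N := by positivity
  have hN1 : (1:ℝ) ≤ N := by exact_mod_cast Nat.one_le_of_lt hN
  -- inverse growth lemma
  have hinvpos : ∀ s > 0, 0 < Ginv s := by
    intro s hs
    rcases lt_or_eq_of_le (hinv_nonneg s hs.le) with h | h
    · exact h
    · exfalso
      have := hright s hs.le
      rw [← h, hG0] at this
      linarith
  have key : ∀ s > 0, ∀ l ≥ 1, Ginv (l * s) ≤ l ^ ((1:ℝ)/gm) * Ginv s := by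
    intro s hs l hl
    have hμ : 1 ≤ l ^ ((1:ℝ)/gm) :=
      Real.one_le_rpow hl (by positivity)
    have hA := stmt11_aux g G gm hG0 hGsm hderiv (fun t ht => (hLieb t ht).1)
      (hinvpos s hs) hμ
    have hpow : (l ^ ((1:ℝ)/gm)) ^ gm = l := by
      rw [← Real.rpow_mul (by linarith : (0:ℝ) ≤ l),
        one_div_mul_cancel (by positivity : gm ≠ 0), Real.rpow_one]
    rw [hpow, hright s hs.le] at hA
    have hls : (0:ℝ) < l * s := mul_pos (by linarith) hs
    have h1 : G (Ginv (l * s)) = l * s := hright _ hls.le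
    have hmem1 : Ginv (l * s) ∈ Set.Ici (0:ℝ) := hinv_nonneg _ hls.le
    have hmem2 : l ^ ((1:ℝ)/gm) * Ginv s ∈ Set.Ici (0:ℝ) :=
      mul_nonneg (by linarith) (hinv_nonneg s hs.le)
    exact (hGsm.le_iff_le hmem1 hmem2).mp (by rw [h1]; exact hA)
  -- the squeeze
  have hc : (0:ℝ) < (1/(N:ℝ)) * (1 - 1/gm) := by
    have : (0:ℝ) < 1 - 1/gm := by
      have : 1/gm < 1 := by rw [div_lt_one (by linarith)]; exact hgm
      linarith
    positivity
  have hbound : Tendsto (fun t : ℝ => (N:ℝ) * t ^ (-((1/(N:ℝ)) * (1 - 1/gm))))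
      atTop (𝓝 0) := by
    have := (tendsto_rpow_neg_atTop hc).const_mul (N:ℝ)
    simpa using this
  apply squeeze_zero' _ _ hbound
  · filter_upwards [eventually_ge_atTop (1:ℝ)] with t ht
    have ht0 : (0:ℝ) < t := by linarith
    have hs0 : (0:ℝ) < t ^ (1 - (1:ℝ)/N) := Real.rpow_pos_of_pos ht0 _
    have hl0 : (0:ℝ) < t ^ ((1:ℝ)/N) := Real.rpow_pos_of_pos ht0 _
    apply mul_nonneg (div_nonneg hNpos.le hl0.le)
    exact div_nonneg (hinv_nonneg t ht0.le) (hinv_nonneg _ hs0.le)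
  · filter_upwards [eventually_ge_atTop (1:ℝ)] with t ht
    have ht0 : (0:ℝ) < t := by linarith
    have hexp : (0:ℝ) ≤ 1 - (1:ℝ)/N := by
      have : (1:ℝ)/N ≤ 1 := by rw [div_le_one hNpos]; exact hN1
      linarith
    set s := t ^ (1 - (1:ℝ)/N) with hsdef
    set l := t ^ ((1:ℝ)/N) with hldef
    have hs1 : (1:ℝ) ≤ s := Real.one_le_rpow ht hexp
    have hl1 : (1:ℝ) ≤ l := Real.one_le_rpow ht (by positivity)
    have hls : l * s = t := by
      rw [hsdef, hldef, ← Real.rpow_add ht0]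
      ring_nf
      exact Real.rpow_one t
    have hkey := key s (by linarith) l hl1
    rw [hls] at hkey
    have hGinvs : 0 < Ginv s := hinvpos s (by linarith)
    have hl0 : (0:ℝ) < l := by linarith
    have hstep : (N:ℝ) / l * (Ginv t / Ginv s) ≤ (N:ℝ) / l * (l ^ ((1:ℝ)/gm)) := by
      apply mul_le_mul_of_nonneg_left _ (div_nonneg hNpos.le hl0.le)
      rw [div_le_iff₀ hGinvs]
      exact hkey
    refine hstep.trans (le_of_eq ?_)
    have hlpow : l ^ ((1:ℝ)/gm) = t ^ ((1:ℝ)/N * (1/gm)) := by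
      rw [hldef, ← Real.rpow_mul ht0.le]
    rw [hlpow, hldef]
    rw [div_mul_eq_mul_div, mul_div_assoc, ← Real.rpow_sub ht0]
    congr 1
    ring
end

section
/- The map α ↦ 𝒮_{G,H}(α) := inf{S_{G,H}(W) : W ⊂ ∂Ω, 𝓗^{N-1}(W) = α} is strictly increasing on (0, 𝓗^{N-1}(∂Ω)), assuming that every minimizer u₀ for 𝒮_{G,H}(α) satisfies 𝓗^{N-1}({u₀ = 0} ∩ ∂Ω) = α. -/
open Filter Topology Set MeasureTheory ENNReal

noncomputable section

variable {N : ℕ}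

/-- The Orlicz–Dirichlet energy `∫_Ω G(|∇u|) + G(|u|) dx`. -/
def energy (G : ℝ → ℝ) (Ω : Set (EuclideanSpace ℝ (Fin N)))
    (u : EuclideanSpace ℝ (Fin N) → ℝ) : ℝ :=
  ∫ x in Ω, (G ‖fderiv ℝ u x‖ + G |u x|)

/-- The boundary modular `∫_{∂Ω} H(|u|) d𝓗^{N-1}`. -/
def bModular (H : ℝ → ℝ) (Ω : Set (EuclideanSpace ℝ (Fin N)))
    (u : EuclideanSpace ℝ (Fin N) → ℝ) : ℝ :=
  ∫ x in frontier Ω, H |u x| ∂(μH[(N : ℝ) - 1])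

/-- Membership in `W^{1,G}(Ω) \ W₀^{1,G}(Ω)` with normalized boundary modular. -/
def inX (G H : ℝ → ℝ) (Ω : Set (EuclideanSpace ℝ (Fin N)))
    (u : EuclideanSpace ℝ (Fin N) → ℝ) : Prop :=
  IntegrableOn (fun x => G ‖fderiv ℝ u x‖ + G |u x|) Ω volume ∧
  ¬ (∀ᵐ x ∂((μH[(N : ℝ) - 1]).restrict (frontier Ω)), u x = 0) ∧
  bModular H Ω u = 1

/-- The trace constant `S_{G,H}(W)` for a boundary window `W`. -/
def SGH (G H : ℝ → ℝ) (Ω W : Set (EuclideanSpace ℝ (Fin N))) : ℝ :=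
  sInf {e : ℝ | ∃ u, inX G H Ω u ∧
    (∀ᵐ x ∂((μH[(N : ℝ) - 1]).restrict W), u x = 0) ∧ e = energy G Ω u}

/-- The shape optimization constant `𝒮_{G,H}(α)`. -/
def Sshape (G H : ℝ → ℝ) (Ω : Set (EuclideanSpace ℝ (Fin N))) (α : ℝ≥0∞) : ℝ :=
  sInf {s : ℝ | ∃ W, W ⊆ frontier Ω ∧ μH[(N : ℝ) - 1] W = α ∧ s = SGH G H Ω W}

/-- assuming the characterization of `𝒮_{G,H}(α)`, existence of minimizers,
and that every minimizer for `𝒮_{G,H}(α)` has boundary zero set of `𝓗^{N-1}`-measure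
exactly `α`, the map `α ↦ 𝒮_{G,H}(α)` is strictly increasing on
`(0, 𝓗^{N-1}(∂Ω))`. -/
theorem stmt16 (hN : 2 ≤ N) (G H : ℝ → ℝ)
    (Ω : Set (EuclideanSpace ℝ (Fin N)))
    (hΩopen : IsOpen Ω) (hΩbd : Bornology.IsBounded Ω) (hΩne : Ω.Nonempty)
    (hchar : ∀ α ∈ Set.Ioo 0 (μH[(N : ℝ) - 1] (frontier Ω)),
      Sshape G H Ω α = sInf {e : ℝ | ∃ u, inX G H Ω u ∧
        α ≤ μH[(N : ℝ) - 1] {x ∈ frontier Ω | u x = 0} ∧ e = energy G Ω u})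
    (hexist : ∀ α ∈ Set.Ioo 0 (μH[(N : ℝ) - 1] (frontier Ω)),
      ∃ u, inX G H Ω u ∧ α ≤ μH[(N : ℝ) - 1] {x ∈ frontier Ω | u x = 0} ∧
        energy G Ω u = Sshape G H Ω α)
    (hsharp : ∀ α ∈ Set.Ioo 0 (μH[(N : ℝ) - 1] (frontier Ω)), ∀ u,
      inX G H Ω u → α ≤ μH[(N : ℝ) - 1] {x ∈ frontier Ω | u x = 0} →
      energy G Ω u = Sshape G H Ω α →
      μH[(N : ℝ) - 1] {x ∈ frontier Ω | u x = 0} = α) :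
    StrictMonoOn (Sshape G H Ω) (Set.Ioo 0 (μH[(N : ℝ) - 1] (frontier Ω))) := by
  -- Notation for the admissible-level sets
  have eqtrick : ∀ β ∈ Set.Ioo 0 (μH[(N : ℝ) - 1] (frontier Ω)),
      ∀ β' ∈ Set.Ioo 0 (μH[(N : ℝ) - 1] (frontier Ω)), β < β' →
      Sshape G H Ω β = Sshape G H Ω β' → False := by
    intro β hβ β' hβ' hlt heq
    obtain ⟨u, hu, hm, he⟩ := hexist β' hβ'
    have h2 := hsharp β hβ u hu (le_trans hlt.le hm) (by rw [he, ← heq])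
    exact absurd (hm.trans_eq h2) (not_le.mpr hlt)
  intro α hα σ hσ hlt
  have bdd : BddBelow {e : ℝ | ∃ u, inX G H Ω u ∧
      α ≤ μH[(N : ℝ) - 1] {x ∈ frontier Ω | u x = 0} ∧ e = energy G Ω u} := by
    by_contra hb
    have h0 : Sshape G H Ω α = 0 := by
      rw [hchar α hα]; exact Real.sInf_of_not_bddBelow hb
    have hα0 : α ≠ 0 := hα.1.ne'
    have hαtop : α ≠ ⊤ := (hα.2.trans_le le_top).ne
    have hhalf : α / 2 < α := ENNReal.half_lt_self hα0 hαtop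
    have hhβ : α / 2 ∈ Set.Ioo 0 (μH[(N : ℝ) - 1] (frontier Ω)) :=
      ⟨ENNReal.half_pos hα0, hhalf.trans hα.2⟩
    have hsub : {e : ℝ | ∃ u, inX G H Ω u ∧
          α ≤ μH[(N : ℝ) - 1] {x ∈ frontier Ω | u x = 0} ∧ e = energy G Ω u} ⊆
        {e : ℝ | ∃ u, inX G H Ω u ∧
          α / 2 ≤ μH[(N : ℝ) - 1] {x ∈ frontier Ω | u x = 0} ∧ e = energy G Ω u} := by
      rintro e ⟨u, hu, hm, he⟩
      exact ⟨u, hu, le_trans hhalf.le hm, he⟩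
    have hb2 : ¬ BddBelow {e : ℝ | ∃ u, inX G H Ω u ∧
        α / 2 ≤ μH[(N : ℝ) - 1] {x ∈ frontier Ω | u x = 0} ∧ e = energy G Ω u} :=
      fun h => hb (h.mono hsub)
    have h0' : Sshape G H Ω (α / 2) = 0 := by
      rw [hchar _ hhβ]; exact Real.sInf_of_not_bddBelow hb2
    exact eqtrick (α / 2) hhβ α hα hhalf (h0'.trans h0.symm)
  obtain ⟨u, hu, hm, he⟩ := hexist σ hσ
  have hmem : energy G Ω u ∈ {e : ℝ | ∃ u, inX G H Ω u ∧
      α ≤ μH[(N : ℝ) - 1] {x ∈ frontier Ω | u x = 0} ∧ e = energy G Ω u} :=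
    ⟨u, hu, le_trans hlt.le hm, rfl⟩
  have hle : Sshape G H Ω α ≤ Sshape G H Ω σ := by
    rw [hchar α hα, ← he]
    exact csInf_le bdd hmem
  exact lt_of_le_of_ne hle (fun h => (eqtrick α hα σ hσ hlt h).elim)

end
end
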